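/- For every integer p ≥ 2, the 3-comb-pasting S_p is isomorphic to a subgraph of L_3(θ_{3,p}); consequently, for all n, ex(n, S_p) ≤ ex(n, L_3(θ_{3,p})). -/

import Mathlib

open SimpleGraph

/-- `G` contains a copy of `H` (an injective graph homomorphism from `H` to `G`). -/
def SimpleGraph.Contains {α β : Type*} (G : SimpleGraph α) (H : SimpleGraph β) : Prop :=
  ∃ f : H →g G, Function.Injective f

/-- The Turán number `ex(n, H)`: the maximum number of edges in an `n`-vertex
graph containing no copy of `H`. -/
noncomputable def exNum {β : Type*} (n : ℕ) (H : SimpleGraph β) : ℕ :=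
  sSup {N : ℕ | ∃ G : SimpleGraph (Fin n), ¬ G.Contains H ∧ G.edgeSet.ncard = N}

/-- The theta graph `θ_{3,p}`: `p` internally disjoint paths of length `3` joining the two
endpoints `Sum.inl false` and `Sum.inl true`; the `i`-th path is
`inl false — (i,0) — (i,1) — inl true`. -/
def theta3 (p : ℕ) : SimpleGraph (Bool ⊕ (Fin p × Fin 2)) :=
  SimpleGraph.fromRel fun x y =>
    match x, y with
    | Sum.inl b, Sum.inr (_, j) => (b = false ∧ (j : ℕ) = 0) ∨ (b = true ∧ (j : ℕ) = 1)
    | Sum.inr (i, j), Sum.inr (ii, jj) => i = ii ∧ (jj : ℕ) = (j : ℕ) + 1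
    | _, _ => False

/-- The partite set `A` of `θ_{3,p}` containing `inl false`, enumerated by `Fin (p+1)`:
it consists of `inl false` together with the internal vertices `(i, 1)`. -/
def AvertOf (p : ℕ) : Fin (p + 1) → Bool ⊕ (Fin p × Fin 2) :=
  Fin.cases (Sum.inl false) fun i => Sum.inr (i, 1)

/-- `L₃(θ_{3,p})`: the graph obtained from `θ_{3,p}` by adding a new vertex (`inr (inr ())`)
joined to every vertex of the partite set `A` by internally disjoint paths of length `2`,
whose internal vertices (`inr (inl j)` for `j : Fin (p+1)`) are new and distinct. -/
def L3theta3 (p : ℕ) :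
    SimpleGraph ((Bool ⊕ (Fin p × Fin 2)) ⊕ (Fin (p + 1) ⊕ Unit)) :=
  SimpleGraph.fromRel fun x y =>
    match x, y with
    | Sum.inl a, Sum.inl b => (theta3 p).Adj a b
    | Sum.inr (Sum.inl _), Sum.inr (Sum.inr _) => True
    | Sum.inl a, Sum.inr (Sum.inl j) => a = AvertOf p j
    | _, _ => False

/-- The 3-comb-pasting `S_p`: `p` disjoint copies of the 3-comb `T₃` (a path `a b c` plus
pendant vertices attached to `a`, `b`, `c`), with the `p` images of the pendant vertex at `a`
identified into the single vertex `Sum.inl 0`, those at `b` into `Sum.inl 1`, and those at `c`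
into `Sum.inl 2`; the `i`-th copy of the path is `(i,0) (i,1) (i,2)`. -/
def combPasting (p : ℕ) : SimpleGraph (Fin 3 ⊕ (Fin p × Fin 3)) :=
  SimpleGraph.fromRel fun x y =>
    match x, y with
    | Sum.inl j, Sum.inr (_, jj) => j = jj
    | Sum.inr (i, j), Sum.inr (ii, jj) => i = ii ∧ (jj : ℕ) = (j : ℕ) + 1
    | _, _ => False


/-!
The three vertices obtained by pasting go to the apex `u` of `L₃(θ_{3,p})` and to the two
ends `inl true`, `inl false` of `θ_{3,p}`. The `i`-th copy of the path `a b c` goes to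
`w_{i+1} — (i,1) — (i,0)`, where `w_{i+1}` is the subdivision vertex joining `u` to
`(i,1) ∈ A`: then `a`, `b`, `c` are adjacent to the images `u`, `inl true`, `inl false` of
their pendant vertices, and the map is injective. A graph without a copy of `L₃(θ_{3,p})`
has no copy of `S_p` either, which gives the Turán-number inequality.
-/

namespace SimpleGraph

variable {α β γ : Type*} {G : SimpleGraph α} {H : SimpleGraph β} {K : SimpleGraph γ}

theorem fromRel_le {r : α → α → Prop} (h : ∀ ⦃a b⦄, a ≠ b → r a b → G.Adj a b) :
    fromRel r ≤ G := by
  rintro a b ⟨hab, hr | hr⟩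
  exacts [h hab hr, (h hab.symm hr).symm]

theorem Contains.of_le_comap {f : β → α} (hf : Function.Injective f) (h : H ≤ G.comap f) :
    G.Contains H :=
  ⟨(Hom.comap f G).comp (Hom.ofLE h), hf⟩

theorem Contains.trans (hGH : G.Contains H) (hHK : H.Contains K) : G.Contains K :=
  let ⟨f, hf⟩ := hGH
  let ⟨g, hg⟩ := hHK
  ⟨f.comp g, hf.comp hg⟩

theorem Contains.exNum_le (hHK : H.Contains K) (n : ℕ) : exNum n K ≤ exNum n H := by
  refine csSup_le_csSup' ⟨Nat.card (Sym2 (Fin n)), ?_⟩ ?_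
  · rintro _ ⟨G, -, rfl⟩
    exact Set.ncard_le_card _
  · rintro _ ⟨G, hG, rfl⟩
    exact ⟨G, fun hGH => hG (hGH.trans hHK), rfl⟩

end SimpleGraph

section

variable {p : ℕ}

theorem theta3_adj_false (i : Fin p) : (theta3 p).Adj (Sum.inl false) (Sum.inr (i, 0)) := by
  simp [theta3]

theorem theta3_adj_true (i : Fin p) : (theta3 p).Adj (Sum.inl true) (Sum.inr (i, 1)) := by
  simp [theta3]

theorem theta3_adj_inner (i : Fin p) : (theta3 p).Adj (Sum.inr (i, 0)) (Sum.inr (i, 1)) := by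
  simp [theta3]

theorem L3theta3_adj_inl {a b : Bool ⊕ (Fin p × Fin 2)} (h : (theta3 p).Adj a b) :
    (L3theta3 p).Adj (Sum.inl a) (Sum.inl b) := by
  simp [L3theta3, h.ne, h]

theorem L3theta3_adj_apex (j : Fin (p + 1)) :
    (L3theta3 p).Adj (Sum.inr (Sum.inr ())) (Sum.inr (Sum.inl j)) := by
  simp [L3theta3]

theorem L3theta3_adj_AvertOf (j : Fin (p + 1)) :
    (L3theta3 p).Adj (Sum.inl (AvertOf p j)) (Sum.inr (Sum.inl j)) := by
  simp [L3theta3]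

end

def combPastingToL3theta3 (p : ℕ) :
    Fin 3 ⊕ (Fin p × Fin 3) → (Bool ⊕ (Fin p × Fin 2)) ⊕ (Fin (p + 1) ⊕ Unit)
  | Sum.inl j => ![Sum.inr (Sum.inr ()), Sum.inl (Sum.inl true), Sum.inl (Sum.inl false)] j
  | Sum.inr (i, j) =>
      ![Sum.inr (Sum.inl i.succ), Sum.inl (Sum.inr (i, 1)), Sum.inl (Sum.inr (i, 0))] j

theorem combPastingToL3theta3_injective (p : ℕ) :
    Function.Injective (combPastingToL3theta3 p) := by
  rintro (j | ⟨i, j⟩) (j' | ⟨i', j'⟩) h <;> fin_cases j <;> fin_cases j' <;>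
    simp_all [combPastingToL3theta3]

theorem combPasting_le_comap_L3theta3 (p : ℕ) :
    combPasting p ≤ (L3theta3 p).comap (combPastingToL3theta3 p) := by
  refine SimpleGraph.fromRel_le fun x y _ hxy => ?_
  rcases x with j | ⟨i, j⟩ <;> rcases y with j' | ⟨i', j'⟩
  · exact hxy.elim
  · obtain rfl : j = j' := hxy
    fin_cases j
    · exact L3theta3_adj_apex _
    · exact L3theta3_adj_inl (theta3_adj_true i')
    · exact L3theta3_adj_inl (theta3_adj_false i')
  · exact hxy.elim
  · obtain ⟨rfl, hj⟩ := hxy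
    fin_cases j <;> fin_cases j' <;> simp at hj
    · exact (L3theta3_adj_AvertOf i.succ).symm
    · exact (L3theta3_adj_inl (theta3_adj_inner i)).symm

theorem combPasting_subgraph_L3theta3_general (p : ℕ) :
    (L3theta3 p).Contains (combPasting p) ∧
      ∀ n : ℕ, exNum n (combPasting p) ≤ exNum n (L3theta3 p) := by
  have hcontains : (L3theta3 p).Contains (combPasting p) :=
    .of_le_comap (combPastingToL3theta3_injective p) (combPasting_le_comap_L3theta3 p)
  exact ⟨hcontains, hcontains.exNum_le⟩

/-- For every $p ≥ 2$, the 3-comb-pasting $S_p$ is isomorphic to a subgraph of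
$L_3(θ_{3,p})$; consequently $ex(n, S_p) ≤ ex(n, L_3(θ_{3,p}))$ for all $n$. -/
theorem combPasting_subgraph_L3theta3 (p : ℕ) (hp : 2 ≤ p) :
    (L3theta3 p).Contains (combPasting p) ∧
      ∀ n : ℕ, exNum n (combPasting p) ≤ exNum n (L3theta3 p) :=
  combPasting_subgraph_L3theta3_general p
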